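/- arXiv:0910.5002 — 2 statements merged into one kernel-verified Lean document; each statement's English description precedes it below -/
import Mathlib

section
/- For every integer L ≥ 1 and every (a,b) ∈ ℝ², I(a,b;L) ≥ √(a² + b²). -/
/-
Write `(a, b) = r (cos φ, sin φ)` with `r = √(a² + b²)`. The numerator of `I(a,b;L)` is then
`r ∑ₖ g(θₖ - φ)` and the denominator is `∑ₖ g(θₖ)`, where `g = |cos| + |sin|`. Since `g` is
`π/2`-periodic and concave on `[0, π/2]` (where it equals `cos + sin`), the phase sum
`S(c) = ∑ₖ g(θₖ + c)` is `π/(2L)`-periodic and concave on `[0, π/(2L)]`. A concave function on an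
interval is at least the smaller of its endpoint values, and these agree by periodicity, so
`S(c) ≥ S(0)` for every `c`.
-/

open Real

/-- The Riemannian approximation `I(a,b;L)` of `√(a² + b²)` built from the angles
`θ_k = πk/(2L)`, `k = 0, …, L−1`. -/
noncomputable def Ifun (L : ℕ) (a b : ℝ) : ℝ :=
  (∑ k ∈ Finset.range L,
      (|a * Real.cos (π * (k : ℝ) / (2 * (L : ℝ))) + b * Real.sin (π * (k : ℝ) / (2 * (L : ℝ)))| +
       |b * Real.cos (π * (k : ℝ) / (2 * (L : ℝ))) - a * Real.sin (π * (k : ℝ) / (2 * (L : ℝ)))|)) /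
  (∑ k ∈ Finset.range L,
      (Real.cos (π * (k : ℝ) / (2 * (L : ℝ))) + Real.sin (π * (k : ℝ) / (2 * (L : ℝ)))))

open Set Function

theorem ConcaveOn.finset_sum {𝕜 E β ι : Type*} [Semiring 𝕜] [PartialOrder 𝕜] [AddCommMonoid E]
    [AddCommMonoid β] [PartialOrder β] [IsOrderedAddMonoid β] [SMul 𝕜 E] [Module 𝕜 β]
    {s : Set E} {t : Finset ι} {f : ι → E → β} (hs : Convex 𝕜 s)
    (hf : ∀ i ∈ t, ConcaveOn 𝕜 s (f i)) : ConcaveOn 𝕜 s fun x => ∑ i ∈ t, f i x := by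
  classical
  induction t using Finset.induction_on with
  | empty => simpa using concaveOn_const 0 hs
  | insert i t hi ih =>
    simp only [Finset.sum_insert hi]
    exact (hf i (Finset.mem_insert_self i t)).add
      (ih fun j hj => hf j (Finset.mem_insert_of_mem hj))

noncomputable def equispacedSum (f : ℝ → ℝ) (p : ℝ) (L : ℕ) (c : ℝ) : ℝ :=
  ∑ k ∈ Finset.range L, f (k * (p / L) + c)

theorem Function.Periodic.equispacedSum {f : ℝ → ℝ} {p : ℝ} (hf : Periodic f p) {L : ℕ}
    (hL : L ≠ 0) : Periodic (equispacedSum f p L) (p / L) := by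
  intro c
  have hshift : ∀ k : ℕ, (k : ℝ) * (p / L) + (c + p / L) = ((k + 1 : ℕ) : ℝ) * (p / L) + c := by
    intro k; push_cast; ring
  have hwrap : f ((L : ℝ) * (p / L) + c) = f ((0 : ℕ) * (p / L) + c) := by
    rw [mul_div_cancel₀ p (Nat.cast_ne_zero.2 hL), add_comm, hf, Nat.cast_zero, zero_mul, zero_add]
  unfold _root_.equispacedSum
  simp only [hshift]
  have := Finset.sum_range_succ' (fun k => f ((k : ℝ) * (p / L) + c)) L
  rw [Finset.sum_range_succ, hwrap] at this
  linarith

theorem natCast_mul_div_add_mem_Icc {p x : ℝ} {k L : ℕ} (hk : k < L) (hx : x ∈ Icc 0 (p / L)) :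
    k * (p / L) + x ∈ Icc 0 p := by
  have hkL : (k : ℝ) + 1 ≤ L := by exact_mod_cast hk
  have hd : 0 ≤ p / L := hx.1.trans hx.2
  have hLd : (L : ℝ) * (p / L) = p := mul_div_cancel₀ p (by linarith)
  constructor <;> nlinarith [hx.1, hx.2]

theorem ConcaveOn.equispacedSum {f : ℝ → ℝ} {p : ℝ} (hf : ConcaveOn ℝ (Icc 0 p) f) (L : ℕ) :
    ConcaveOn ℝ (Icc 0 (p / L)) (equispacedSum f p L) :=
  ConcaveOn.finset_sum (convex_Icc 0 _) fun _ hk => (hf.translate_right _).subset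
    (fun _ hx => natCast_mul_div_add_mem_Icc (Finset.mem_range.1 hk) hx) (convex_Icc 0 _)

theorem equispacedSum_zero_le {f : ℝ → ℝ} {p : ℝ} (hper : Periodic f p)
    (hconc : ConcaveOn ℝ (Icc 0 p) f) (hp : 0 < p) {L : ℕ} (hL : L ≠ 0) (c : ℝ) :
    equispacedSum f p L 0 ≤ equispacedSum f p L c := by
  have hd : 0 < p / L := by positivity
  obtain ⟨y, hy, hcy⟩ := (hper.equispacedSum hL).exists_mem_Ico₀ hd c
  have hmin := (hconc.equispacedSum L).min_le_of_mem_Icc (left_mem_Icc.2 hd.le)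
    (right_mem_Icc.2 hd.le) (Ico_subset_Icc_self hy)
  rwa [← zero_add (p / L), (hper.equispacedSum hL) 0, min_self, ← hcy] at hmin

noncomputable def absCosAddAbsSin (x : ℝ) : ℝ := |cos x| + |sin x|

theorem periodic_absCosAddAbsSin : Periodic absCosAddAbsSin (π / 2) := fun x => by
  simp only [absCosAddAbsSin, cos_add_pi_div_two, sin_add_pi_div_two, abs_neg, add_comm]

theorem absCosAddAbsSin_eq_of_mem_Icc {x : ℝ} (hx : x ∈ Icc 0 (π / 2)) :
    absCosAddAbsSin x = cos x + sin x := by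
  rw [absCosAddAbsSin, abs_of_nonneg (cos_nonneg_of_mem_Icc ⟨by linarith [hx.1, pi_pos], hx.2⟩),
    abs_of_nonneg (sin_nonneg_of_nonneg_of_le_pi hx.1 (by linarith [hx.2, pi_pos]))]

theorem concaveOn_absCosAddAbsSin : ConcaveOn ℝ (Icc 0 (π / 2)) absCosAddAbsSin := by
  have hcos : Icc 0 (π / 2) ⊆ Icc (-(π / 2)) (π / 2) := Icc_subset_Icc (by linarith [pi_pos]) le_rfl
  have hsin : Icc 0 (π / 2) ⊆ Icc 0 π := Icc_subset_Icc le_rfl (by linarith [pi_pos])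
  exact ((strictConcaveOn_cos_Icc.concaveOn.subset hcos (convex_Icc _ _)).add
    (strictConcaveOn_sin_Icc.concaveOn.subset hsin (convex_Icc _ _))).congr
    fun _ hx => (absCosAddAbsSin_eq_of_mem_Icc hx).symm

theorem one_le_absCosAddAbsSin (x : ℝ) : 1 ≤ absCosAddAbsSin x := by
  rw [absCosAddAbsSin, ← sin_sq_add_cos_sq x, ← sq_abs (sin x), ← sq_abs (cos x)]
  nlinarith [abs_cos_le_one x, abs_sin_le_one x, abs_nonneg (cos x), abs_nonneg (sin x)]

theorem exists_eq_mul_cos_and_eq_mul_sin (a b : ℝ) :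
    ∃ r φ : ℝ, 0 ≤ r ∧ a = r * cos φ ∧ b = r * sin φ :=
  ⟨‖(⟨a, b⟩ : ℂ)‖, Complex.arg ⟨a, b⟩, norm_nonneg _,
    (Complex.norm_mul_cos_arg ⟨a, b⟩).symm, (Complex.norm_mul_sin_arg ⟨a, b⟩).symm⟩

theorem sqrt_mul_cos_sq_add_mul_sin_sq {r : ℝ} (hr : 0 ≤ r) (φ : ℝ) :
    √((r * cos φ) ^ 2 + (r * sin φ) ^ 2) = r := by
  rw [show (r * cos φ) ^ 2 + (r * sin φ) ^ 2 = r ^ 2 by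
    linear_combination r ^ 2 * cos_sq_add_sin_sq φ, sqrt_sq hr]

theorem Ifun_mul_cos_mul_sin (L : ℕ) {r : ℝ} (hr : 0 ≤ r) (φ : ℝ) :
    Ifun L (r * cos φ) (r * sin φ) = r * equispacedSum absCosAddAbsSin (π / 2) L (-φ) /
      equispacedSum absCosAddAbsSin (π / 2) L 0 := by
  have hangle : ∀ k : ℕ, π * k / (2 * L) = k * (π / 2 / L) := fun k => by ring
  simp only [Ifun, equispacedSum, hangle, Finset.mul_sum]
  congr 1
  · refine Finset.sum_congr rfl fun k _ => ?_
    set θ := (k : ℝ) * (π / 2 / L)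
    have hcos : r * cos φ * cos θ + r * sin φ * sin θ = r * cos (θ + -φ) := by
      rw [← sub_eq_add_neg, cos_sub]; ring
    have hsin : r * sin φ * cos θ - r * cos φ * sin θ = -(r * sin (θ + -φ)) := by
      rw [← sub_eq_add_neg, sin_sub]; ring
    rw [hcos, hsin, abs_neg, abs_mul, abs_mul, abs_of_nonneg hr, absCosAddAbsSin, mul_add]
  · refine Finset.sum_congr rfl fun k hk => ?_
    rw [← absCosAddAbsSin_eq_of_mem_Icc, add_zero]
    simpa using natCast_mul_div_add_mem_Icc (p := π / 2) (x := 0) (Finset.mem_range.1 hk)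
      ⟨le_rfl, by positivity⟩

theorem stmt1 (L : ℕ) (hL : 1 ≤ L) (a b : ℝ) :
    Real.sqrt (a ^ 2 + b ^ 2) ≤ Ifun L a b := by
  obtain ⟨r, φ, hr, rfl, rfl⟩ := exists_eq_mul_cos_and_eq_mul_sin a b
  have hL0 : L ≠ 0 := Nat.one_le_iff_ne_zero.1 hL
  have hS0 : 0 < equispacedSum absCosAddAbsSin (π / 2) L 0 :=
    Finset.sum_pos (fun _ _ => one_pos.trans_le (one_le_absCosAddAbsSin _))
      (Finset.nonempty_range_iff.2 hL0)
  rw [sqrt_mul_cos_sq_add_mul_sin_sq hr, Ifun_mul_cos_mul_sin L hr, le_div_iff₀ hS0]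
  exact mul_le_mul_of_nonneg_left (equispacedSum_zero_le periodic_absCosAddAbsSin
    concaveOn_absCosAddAbsSin (by positivity) hL0 (-φ)) hr
end

section
/- Let h : ZMod N × ZMod M → ℝ be a mean-preserving kernel. If an image z : ZMod N × ZMod M → ℝ satisfies h ⋆ z = 0 and TV_a(z) = 0, then z = 0. Consequently, for any λ > 0, the map z ↦ ‖h ⋆ z‖₂ + λ·TV_a(z) vanishes only at z = 0. -/
/-- Periodic discrete partial difference in the first (column) direction. -/
def gradX {N M : ℕ} (f : ZMod N × ZMod M → ℝ) : ZMod N × ZMod M → ℝ :=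
  fun p => f p - f (p.1 - 1, p.2)

/-- Periodic discrete partial difference in the second (row) direction. -/
def gradY {N M : ℕ} (f : ZMod N × ZMod M → ℝ) : ZMod N × ZMod M → ℝ :=
  fun p => f p - f (p.1, p.2 - 1)

/-- Anisotropic total variation. -/
noncomputable def TVa {N M : ℕ} [NeZero N] [NeZero M] (f : ZMod N × ZMod M → ℝ) : ℝ :=
  ∑ p : ZMod N × ZMod M, (|gradX f p| + |gradY f p|)

/-- Circular (periodic) convolution of a kernel `h` with an image `f`. -/
noncomputable def conv {N M : ℕ} [NeZero N] [NeZero M]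
    (h f : ZMod N × ZMod M → ℝ) : ZMod N × ZMod M → ℝ :=
  fun p => ∑ q : ZMod N × ZMod M, h q * f (p - q)

/-- The `ℓ₂`-norm of an image. -/
noncomputable def l2norm {N M : ℕ} [NeZero N] [NeZero M]
    (u : ZMod N × ZMod M → ℝ) : ℝ :=
  Real.sqrt (∑ p : ZMod N × ZMod M, (u p) ^ 2)

/-! A vanishing total variation forces both periodic gradients to vanish, so `z` is invariant
under the two unit translations of the torus `ZMod N × ZMod M`; these generate the torus, so `z`
is constant. A mean-preserving kernel fixes constants, hence `h ⋆ z = z`, and `h ⋆ z = 0` gives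
`z = 0`. For the second claim, both summands of `‖h ⋆ z‖₂ + λ TV_a(z)` are nonnegative, so each
vanishes. -/

open Function

section Torus

variable {N M : ℕ}

theorem ZMod.prod_eq_val_nsmul_add_val_nsmul [NeZero N] [NeZero M] (p : ZMod N × ZMod M) :
    p = p.1.val • ((1 : ZMod N), (0 : ZMod M)) + p.2.val • ((0 : ZMod N), (1 : ZMod M)) := by
  ext <;> simp

theorem Function.Periodic.apply_eq_apply_zero_of_zmod_prod {α : Type*} [NeZero N] [NeZero M]
    {f : ZMod N × ZMod M → α} (hx : Periodic f (1, 0)) (hy : Periodic f (0, 1))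
    (p : ZMod N × ZMod M) : f p = f 0 := by
  rw [ZMod.prod_eq_val_nsmul_add_val_nsmul p, ← zero_add (p.1.val • _), hy.nsmul, hx.nsmul]

theorem periodic_of_gradX_eq_zero {f : ZMod N × ZMod M → ℝ} (hf : gradX f = 0) :
    Periodic f (1, 0) := fun ⟨a, b⟩ => by
  simpa [gradX, sub_eq_zero] using congrFun hf (a + 1, b)

theorem periodic_of_gradY_eq_zero {f : ZMod N × ZMod M → ℝ} (hf : gradY f = 0) :
    Periodic f (0, 1) := fun ⟨a, b⟩ => by
  simpa [gradY, sub_eq_zero] using congrFun hf (a, b + 1)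

end Torus

section Image

variable {N M : ℕ} [NeZero N] [NeZero M]

theorem TVa_nonneg (f : ZMod N × ZMod M → ℝ) : 0 ≤ TVa f :=
  Finset.sum_nonneg fun _ _ => by positivity

theorem gradX_eq_zero_and_gradY_eq_zero_of_TVa_eq_zero {f : ZMod N × ZMod M → ℝ}
    (hf : TVa f = 0) : gradX f = 0 ∧ gradY f = 0 := by
  have hterm := (Finset.sum_eq_zero_iff_of_nonneg fun p _ => by positivity).mp hf
  refine ⟨funext fun p => ?_, funext fun p => ?_⟩ <;>
  · have := hterm p (Finset.mem_univ p)
    rw [add_eq_zero_iff_of_nonneg (abs_nonneg _) (abs_nonneg _), abs_eq_zero, abs_eq_zero] at this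
    simp [this]

theorem eq_const_of_TVa_eq_zero {f : ZMod N × ZMod M → ℝ} (hf : TVa f = 0) :
    f = const _ (f 0) := by
  obtain ⟨hx, hy⟩ := gradX_eq_zero_and_gradY_eq_zero_of_TVa_eq_zero hf
  exact funext <| (periodic_of_gradX_eq_zero hx).apply_eq_apply_zero_of_zmod_prod
    (periodic_of_gradY_eq_zero hy)

theorem conv_const (h : ZMod N × ZMod M → ℝ) (c : ℝ) :
    conv h (const _ c) = const _ ((∑ q, h q) * c) :=
  funext fun _ => (Finset.sum_mul _ _ _).symm

theorem l2norm_eq_zero_iff {u : ZMod N × ZMod M → ℝ} : l2norm u = 0 ↔ u = 0 := by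
  rw [l2norm, Real.sqrt_eq_zero (Finset.sum_nonneg fun _ _ => sq_nonneg _),
    Finset.sum_eq_zero_iff_of_nonneg fun _ _ => sq_nonneg _, funext_iff]
  simp

end Image

theorem stmt15 {N M : ℕ} [NeZero N] [NeZero M] (h : ZMod N × ZMod M → ℝ)
    (hmean : ∑ p : ZMod N × ZMod M, h p = 1) :
    (∀ z : ZMod N × ZMod M → ℝ, conv h z = 0 → TVa z = 0 → z = 0) ∧
    (∀ lam : ℝ, 0 < lam → ∀ z : ZMod N × ZMod M → ℝ,
      l2norm (conv h z) + lam * TVa z = 0 → z = 0) := by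
  have injective : ∀ z : ZMod N × ZMod M → ℝ, conv h z = 0 → TVa z = 0 → z = 0 := by
    intro z hconv htv
    have hconst := eq_const_of_TVa_eq_zero htv
    rw [hconst, conv_const, hmean, one_mul] at hconv
    rwa [← hconst] at hconv
  refine ⟨injective, fun lam hlam z hz => ?_⟩
  obtain ⟨hfit, hreg⟩ := (add_eq_zero_iff_of_nonneg (Real.sqrt_nonneg _)
    (mul_nonneg hlam.le (TVa_nonneg z))).mp hz
  exact injective z (l2norm_eq_zero_iff.mp hfit) ((mul_eq_zero.mp hreg).resolve_left hlam.ne')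
end
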